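/- Let m be a natural number and let c : ℂ → ℂ be holomorphic (complex-differentiable) on the open unit disk D. Define F(z) = c(z)·conj(z)^m·(1 − |z|²)^{−m}. Then for every z ∈ D: (i) D̄^{∘m} F(z) = m!·c(z), and (ii) D̄^{∘(m+1)} F(z) = 0. -/

import Mathlib

open Complex

/-- The Wirtinger derivative `∂̄f(z) = (1/2)(L(1) + i·L(i))`, `L = fderiv ℝ f z`. -/
noncomputable def wirtingerBar (f : ℂ → ℂ) (z : ℂ) : ℂ :=
  (1 / 2) * ((fderiv ℝ f z) 1 + Complex.I * (fderiv ℝ f z) Complex.I)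

/-- The invariant Cauchy–Riemann operator of the unit disk: `(D̄f)(z) = (1−|z|²)²·∂̄f(z)`. -/
noncomputable def invCR : (ℂ → ℂ) → (ℂ → ℂ) :=
  fun f z => ((1 - ‖z‖ ^ 2 : ℝ) : ℂ) ^ 2 * wirtingerBar f z

lemma coe_one_sub_norm (w : ℂ) : ((1 - ‖w‖ ^ 2 : ℝ) : ℂ) = 1 - w * (starRingEnd ℂ) w := by
  push_cast
  rw [Complex.mul_conj]
  norm_cast
  simp [Complex.normSq_eq_norm_sq]

noncomputable def conjL : ℂ →L[ℝ] ℂ := Complex.conjCLE.toContinuousLinearMap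

lemma hasFDerivAt_conj (z : ℂ) : HasFDerivAt (fun w : ℂ => (starRingEnd ℂ) w) conjL z :=
  conjL.hasFDerivAt

lemma s_ne_zero {z : ℂ} (hz : ‖z‖ < 1) : (1 : ℂ) - z * (starRingEnd ℂ) z ≠ 0 := by
  rw [← coe_one_sub_norm]
  simp only [ne_eq, Complex.ofReal_eq_zero]
  nlinarith [norm_nonneg z]

lemma wirtingerBar_of_holomorphic {f : ℂ → ℂ} {z : ℂ} (hf : DifferentiableAt ℂ f z) :
    wirtingerBar f z = 0 := by
  rw [wirtingerBar, (hf.hasFDerivAt.restrictScalars ℝ).fderiv]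
  have hde : (fderiv ℂ f z) Complex.I = Complex.I * (fderiv ℂ f z) 1 := by
    simpa using (fderiv ℂ f z).map_smul Complex.I 1
  simp only [ContinuousLinearMap.coe_restrictScalars', hde]
  ring_nf
  simp [Complex.I_sq]

lemma invCR_congr {f g : ℂ → ℂ} {z : ℂ} (h : f =ᶠ[nhds z] g) : invCR f z = invCR g z := by
  rw [invCR, invCR, wirtingerBar, wirtingerBar, h.fderiv_eq]

lemma invCR_step (j : ℕ) (c : ℂ → ℂ) (z : ℂ) (hz : ‖z‖ < 1) (hc : DifferentiableAt ℂ c z) :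
    invCR (fun w => c w * (starRingEnd ℂ) w ^ (j + 1)
        * ((1 - ‖w‖ ^ 2 : ℝ) : ℂ) ^ (-((j : ℤ) + 1))) z
    = ((j : ℂ) + 1) * (c z * (starRingEnd ℂ) z ^ j * ((1 - ‖z‖ ^ 2 : ℝ) : ℂ) ^ (-(j : ℤ))) := by
  have hfun : (fun w => c w * (starRingEnd ℂ) w ^ (j + 1)
        * ((1 - ‖w‖ ^ 2 : ℝ) : ℂ) ^ (-((j : ℤ) + 1)))
      = (fun w => c w * (starRingEnd ℂ) w ^ (j + 1)
        * (1 - w * (starRingEnd ℂ) w) ^ (-((j : ℤ) + 1))) := by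
    funext w; rw [coe_one_sub_norm]
  set u := (starRingEnd ℂ) z with hu
  have hs : (1 : ℂ) - z * u ≠ 0 := s_ne_zero hz
  have hcc : HasFDerivAt c ((fderiv ℂ c z).restrictScalars ℝ) z :=
    hc.hasFDerivAt.restrictScalars ℝ
  have hconj := hasFDerivAt_conj z
  have hpow : HasFDerivAt (fun w : ℂ => (starRingEnd ℂ) w ^ (j + 1)) _ z :=
    (by have h := ((hasDerivAt_pow (j + 1) u).hasFDerivAt).restrictScalars ℝ; exact h.comp z hconj)
  have hinner : HasFDerivAt (fun w : ℂ => 1 - w * (starRingEnd ℂ) w) _ z :=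
    ((hasFDerivAt_id z).mul hconj).const_sub 1
  have hzp : HasFDerivAt (fun w : ℂ => (1 - w * (starRingEnd ℂ) w) ^ (-((j : ℤ) + 1))) _ z :=
    (by have h := ((hasDerivAt_zpow (-((j : ℤ) + 1)) (1 - z * u) (Or.inl hs)).hasFDerivAt).restrictScalars ℝ; exact h.comp z hinner)
  have hF : HasFDerivAt (fun w => c w * (starRingEnd ℂ) w ^ (j + 1)
        * (1 - w * (starRingEnd ℂ) w) ^ (-((j : ℤ) + 1))) _ z := (hcc.mul hpow).mul hzp
  have hfd := hF.fderiv
  rw [invCR, wirtingerBar, hfun, hfd]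
  simp only [ContinuousLinearMap.add_apply, ContinuousLinearMap.coe_smul',
    Pi.smul_apply, Pi.mul_apply, ContinuousLinearMap.coe_comp', Function.comp_apply,
    ContinuousLinearMap.coe_restrictScalars', ContinuousLinearMap.smulRight_apply, ContinuousLinearMap.toSpanSingleton_apply,
    ContinuousLinearMap.one_apply, ContinuousLinearMap.id_apply,
    ContinuousLinearMap.neg_apply, conjL, ContinuousLinearEquiv.coe_coe,
    Complex.conjCLE_apply, map_one, Complex.conj_I, smul_eq_mul]
  have hde : (fderiv ℂ c z) Complex.I = Complex.I * (fderiv ℂ c z) 1 := by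
    simpa using (fderiv ℂ c z).map_smul Complex.I 1
  rw [coe_one_sub_norm z, hde, ← hu]
  rw [show (-((j:ℤ) + 1)) = -(((j+1 : ℕ)):ℤ) by push_cast; ring]
  rw [show (-(((j+1:ℕ)):ℤ) - 1) = -(((j+2 : ℕ)):ℤ) by push_cast; ring]
  rw [zpow_neg, zpow_neg, zpow_neg, zpow_natCast, zpow_natCast, zpow_natCast]
  simp only [id, Nat.add_sub_cancel]
  push_cast
  field_simp
  ring_nf
  simp only [Complex.I_sq]
  ring

lemma invCR_iterate_claim (m : ℕ) (c : ℂ → ℂ)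
    (hc : DifferentiableOn ℂ c (Metric.ball (0 : ℂ) 1)) (k : ℕ) (hk : k ≤ m) :
    ∀ z ∈ Metric.ball (0 : ℂ) 1,
      invCR^[k]
          (fun w : ℂ => c w * ((starRingEnd ℂ) w) ^ m * ((1 - ‖w‖ ^ 2 : ℝ) : ℂ) ^ (-(m : ℤ))) z
        = (m.descFactorial k : ℂ)
          * (c z * ((starRingEnd ℂ) z) ^ (m - k)
            * ((1 - ‖z‖ ^ 2 : ℝ) : ℂ) ^ (-((m - k : ℕ) : ℤ))) := by
  induction k with
  | zero => intro z hz; simp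
  | succ k ih =>
    intro z hz
    have hk' : k ≤ m := Nat.le_of_succ_le hk
    set j : ℕ := m - (k + 1) with hj
    have hmk : m - k = j + 1 := by omega
    have hdiff : DifferentiableAt ℂ (fun w => ((m.descFactorial k : ℂ)) * c w) z := by
      exact (hc.differentiableAt (Metric.isOpen_ball.mem_nhds hz)).const_mul _
    have heq : invCR^[k]
          (fun w : ℂ => c w * ((starRingEnd ℂ) w) ^ m * ((1 - ‖w‖ ^ 2 : ℝ) : ℂ) ^ (-(m : ℤ)))
        =ᶠ[nhds z]
        (fun w => ((m.descFactorial k : ℂ) * c w) * ((starRingEnd ℂ) w) ^ (j + 1)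
          * ((1 - ‖w‖ ^ 2 : ℝ) : ℂ) ^ (-((j : ℤ) + 1))) := by
      filter_upwards [Metric.isOpen_ball.mem_nhds hz] with w hw
      rw [ih hk' w hw, hmk]
      rw [show (-(((j + 1 : ℕ)) : ℤ)) = -((j : ℤ) + 1) by push_cast; ring]
      ring
    rw [Function.iterate_succ_apply', invCR_congr heq,
      invCR_step j _ z (by simpa using hz) hdiff]
    rw [Nat.descFactorial_succ, hmk]
    push_cast
    ring

/-- For `c` holomorphic on the unit disk and `F(z) = c(z)·conj(z)^m·(1−|z|²)^{−m}`, one has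
`D̄^{∘m} F(z) = m!·c(z)` and `D̄^{∘(m+1)} F(z) = 0` on the disk. -/
theorem invCR_iterate_nearlyHolomorphic_generator (m : ℕ) (c : ℂ → ℂ)
    (hc : DifferentiableOn ℂ c (Metric.ball (0 : ℂ) 1)) (z : ℂ)
    (hz : z ∈ Metric.ball (0 : ℂ) 1) :
    invCR^[m]
        (fun w : ℂ => c w * ((starRingEnd ℂ) w) ^ m * ((1 - ‖w‖ ^ 2 : ℝ) : ℂ) ^ (-(m : ℤ))) z
      = (m.factorial : ℂ) * c z
    ∧ invCR^[m + 1]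
        (fun w : ℂ => c w * ((starRingEnd ℂ) w) ^ m * ((1 - ‖w‖ ^ 2 : ℝ) : ℂ) ^ (-(m : ℤ))) z
      = 0 := by
  constructor
  · have := invCR_iterate_claim m c hc m le_rfl z hz
    simpa [Nat.descFactorial_self] using this
  · rw [Function.iterate_succ_apply']
    have heq : invCR^[m]
          (fun w : ℂ => c w * ((starRingEnd ℂ) w) ^ m * ((1 - ‖w‖ ^ 2 : ℝ) : ℂ) ^ (-(m : ℤ)))
        =ᶠ[nhds z] (fun w => (m.factorial : ℂ) * c w) := by
      filter_upwards [Metric.isOpen_ball.mem_nhds hz] with w hw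
      have := invCR_iterate_claim m c hc m le_rfl w hw
      simpa [Nat.descFactorial_self] using this
    rw [invCR_congr heq, invCR,
      wirtingerBar_of_holomorphic
        ((hc.differentiableAt (Metric.isOpen_ball.mem_nhds hz)).const_mul _), mul_zero]
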